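/- For k ≥ n with 3 | n, the number of closed walks of length n at (0,0) in D_k is f_{0,0}(n,k) = 2·n!/((n/3)!·(n/3+1)!·(n/3+2)!), the 3-dimensional Catalan number. -/

import Mathlib

/-- Directed edge of the graph `D_k`. -/
def Dedge (k : ℕ) (p q : ℕ × ℕ) : Prop :=
  p.1 + p.2 ≤ k ∧ q.1 + q.2 ≤ k ∧
    (q = (p.1, p.2 + 1) ∨ (q.1 + 1 = p.1 ∧ q.2 = p.2) ∨
      (q.1 = p.1 + 1 ∧ q.2 + 1 = p.2))

/-- Walks of length `n` from `u` to `v` in `D_k`. -/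
def Walk (k n : ℕ) (u v : ℕ × ℕ) : Type :=
  { f : Fin (n + 1) → ℕ × ℕ // f 0 = u ∧ f (Fin.last n) = v ∧
      ∀ i : Fin n, Dedge k (f i.castSucc) (f i.succ) }

/-- The number of walks of length `n` from `u` to `v` in `D_k`. -/
noncomputable def walkCount (k n : ℕ) (u v : ℕ × ℕ) : ℕ := Nat.card (Walk k n u v)

namespace Stmt18Aux

/-- Classify a step by comparing second coordinates. -/
def stepType (p q : ℕ × ℕ) : Fin 3 :=
  if q.2 = p.2 + 1 then 0 else if q.2 = p.2 then 1 else 2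

/-- The next vertex given a step type. -/
def nextv (p : ℕ × ℕ) : Fin 3 → ℕ × ℕ
  | 0 => (p.1, p.2 + 1)
  | 1 => (p.1 - 1, p.2)
  | 2 => (p.1 + 1, p.2 - 1)

/-- The previous vertex given a step type. -/
def prevv (v : ℕ × ℕ) : Fin 3 → ℕ × ℕ
  | 0 => (v.1, v.2 - 1)
  | 1 => (v.1 + 1, v.2)
  | 2 => (v.1 - 1, v.2 + 1)

lemma nextv_stepType {k : ℕ} {p q : ℕ × ℕ} (h : Dedge k p q) :
    nextv p (stepType p q) = q := by
  obtain ⟨-, -, h | ⟨h1, h2⟩ | ⟨h1, h2⟩⟩ := h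
  · subst h; simp [stepType, nextv]
  · have : q.2 ≠ p.2 + 1 := by omega
    simp only [stepType, h2, this, if_false, if_pos rfl, nextv]
    ext <;> simp <;> omega
  · have h3 : q.2 ≠ p.2 + 1 := by omega
    have h4 : q.2 ≠ p.2 := by omega
    simp only [stepType, h3, h4, if_false, nextv]
    ext <;> simp <;> omega

lemma prevv_stepType {k : ℕ} {p q : ℕ × ℕ} (h : Dedge k p q) :
    prevv q (stepType p q) = p := by
  obtain ⟨-, -, h | ⟨h1, h2⟩ | ⟨h1, h2⟩⟩ := h
  · subst h; simp [stepType, prevv]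
  · have : q.2 ≠ p.2 + 1 := by omega
    simp only [stepType, h2, this, if_false, if_pos rfl, prevv]
    ext <;> simp <;> omega
  · have h3 : q.2 ≠ p.2 + 1 := by omega
    have h4 : q.2 ≠ p.2 := by omega
    simp only [stepType, h3, h4, if_false, prevv]
    ext <;> simp <;> omega

instance finiteWalk (k n : ℕ) (u v : ℕ × ℕ) : Finite (Walk k n u v) := by
  have hinj : Function.Injective
      (fun w : Walk k n u v => fun i : Fin n => stepType (w.1 i.castSucc) (w.1 i.succ)) := by
    intro w w' hww
    have key : ∀ m (hm : m < n + 1), w.1 ⟨m, hm⟩ = w'.1 ⟨m, hm⟩ := by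
      intro m
      induction m with
      | zero => intro hm; exact (w.2.1).trans (w'.2.1).symm
      | succ m ih =>
        intro hm
        have hmn : m < n := by omega
        set i : Fin n := ⟨m, hmn⟩ with hi
        have hc : i.castSucc = ⟨m, by omega⟩ := rfl
        have hs : i.succ = ⟨m + 1, hm⟩ := rfl
        have e1 := nextv_stepType (w.2.2.2 i)
        have e2 := nextv_stepType (w'.2.2.2 i)
        have hstep : stepType (w.1 i.castSucc) (w.1 i.succ)
            = stepType (w'.1 i.castSucc) (w'.1 i.succ) := congrFun hww i
        have hprev : w.1 i.castSucc = w'.1 i.castSucc := by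
          rw [hc]; exact ih (by omega)
        rw [← hs, ← e1, ← e2, hstep, hprev]
    exact Subtype.ext (funext fun i => key i.1 i.2)
  exact Finite.of_injective _ hinj


lemma stepType_prevv {k : ℕ} {v : ℕ × ℕ} (t : Fin 3) (h : Dedge k (prevv v t) v) :
    stepType (prevv v t) v = t := by
  obtain ⟨i, j⟩ := v
  match t with
  | 0 =>
    have hj : 1 ≤ j := by
      obtain ⟨-, -, h | h | h⟩ := h <;>
        simp only [prevv, Prod.ext_iff, Prod.mk.injEq, Prod.fst, Prod.snd] at h <;> omega
    simp [stepType, prevv, Nat.sub_add_cancel hj]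
  | 1 => simp [stepType, prevv]
  | 2 => simp [stepType, prevv]; omega

section
variable {k n : ℕ} {u v : ℕ × ℕ}

def retarget {q q' : ℕ × ℕ} (h : q = q') (w : Walk k n u q) : Walk k n u q' :=
  ⟨w.1, w.2.1, h ▸ w.2.2.1, w.2.2.2⟩

def extendW (t : Fin 3) (h : Dedge k (prevv v t) v) (w : Walk k n u (prevv v t)) :
    Walk k (n + 1) u v :=
  ⟨Fin.snoc w.1 v, by
      have h0 : (0 : Fin (n + 2)) = Fin.castSucc 0 := rfl
      rw [h0, Fin.snoc_castSucc]; exact w.2.1,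
    Fin.snoc_last _ _, by
      intro i
      refine Fin.lastCases ?_ ?_ i
      · rw [Fin.succ_last, Fin.snoc_last, Fin.snoc_castSucc, w.2.2.1]
        exact h
      · intro j
        rw [Fin.succ_castSucc, Fin.snoc_castSucc, Fin.snoc_castSucc]
        exact w.2.2.2 j⟩

def restrictW (w : Walk k (n + 1) u v) : Walk k n u (w.1 (Fin.castSucc (Fin.last n))) :=
  ⟨Fin.init w.1, w.2.1, rfl, by
    intro j
    show Dedge k (w.1 (Fin.castSucc j.castSucc)) (w.1 (Fin.castSucc j.succ))
    rw [← Fin.succ_castSucc]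
    exact w.2.2.2 j.castSucc⟩

lemma lastEdge (w : Walk k (n + 1) u v) : Dedge k (w.1 (Fin.castSucc (Fin.last n))) v := by
  have := w.2.2.2 (Fin.last n)
  rwa [Fin.succ_last, w.2.2.1] at this

def Tgt (k n : ℕ) (u v : ℕ × ℕ) : Type :=
  (PLift (Dedge k (prevv v 0) v) × Walk k n u (prevv v 0)) ⊕
  (PLift (Dedge k (prevv v 1) v) × Walk k n u (prevv v 1)) ⊕
  (PLift (Dedge k (prevv v 2) v) × Walk k n u (prevv v 2))

lemma pen_eq (w : Walk k (n + 1) u v) {t : Fin 3}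
    (h0 : stepType (w.1 (Fin.castSucc (Fin.last n))) v = t) :
    w.1 (Fin.castSucc (Fin.last n)) = prevv v t := by
  have hp := prevv_stepType (lastEdge w); rw [h0] at hp; exact hp.symm

lemma pen_dedge (w : Walk k (n + 1) u v) {t : Fin 3}
    (h0 : stepType (w.1 (Fin.castSucc (Fin.last n))) v = t) :
    Dedge k (prevv v t) v := by
  rw [← pen_eq w h0]; exact lastEdge w

def decompFun (w : Walk k (n + 1) u v) : Tgt k n u v :=
  if h0 : stepType (w.1 (Fin.castSucc (Fin.last n))) v = 0 then
    Sum.inl ⟨⟨pen_dedge w h0⟩, retarget (pen_eq w h0) (restrictW w)⟩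
  else if h1 : stepType (w.1 (Fin.castSucc (Fin.last n))) v = 1 then
    Sum.inr (Sum.inl ⟨⟨pen_dedge w h1⟩, retarget (pen_eq w h1) (restrictW w)⟩)
  else
    Sum.inr (Sum.inr ⟨⟨pen_dedge w (show _ = (2 : Fin 3) by omega)⟩,
      retarget (pen_eq w (show _ = (2 : Fin 3) by omega)) (restrictW w)⟩)

def decompInv : Tgt k n u v → Walk k (n + 1) u v
  | Sum.inl ⟨⟨h⟩, w⟩ => extendW 0 h w
  | Sum.inr (Sum.inl ⟨⟨h⟩, w⟩) => extendW 1 h w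
  | Sum.inr (Sum.inr ⟨⟨h⟩, w⟩) => extendW 2 h w

lemma decomp_left_inv (w : Walk k (n + 1) u v) : decompInv (decompFun w) = w := by
  have hval : ∀ x, x = decompFun w → (decompInv x).1 = Fin.snoc (Fin.init w.1) v := by
    intro x hx
    unfold decompFun at hx
    split_ifs at hx with h0
    · erw [dif_pos h0] at hx; subst hx; rfl
    · by_cases h1 : stepType (w.1 (Fin.castSucc (Fin.last n))) v = 1
      · erw [dif_neg h0, dif_pos h1] at hx; subst hx; rfl
      · erw [dif_neg h0, dif_neg h1] at hx; subst hx; rfl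
  apply Subtype.ext
  rw [hval _ rfl]
  conv_rhs => rw [← Fin.snoc_init_self w.1]
  rw [w.2.2.1]

lemma decomp_right_inv (x : Tgt k n u v) : decompFun (decompInv x) = x := by
  have pen : ∀ (t : Fin 3) (h : Dedge k (prevv v t) v) (w : Walk k n u (prevv v t)),
      (extendW t h w).1 (Fin.castSucc (Fin.last n)) = prevv v t := by
    intro t h w
    show (Fin.snoc w.1 v : Fin (n + 2) → ℕ × ℕ) (Fin.castSucc (Fin.last n)) = _
    rw [Fin.snoc_castSucc]; exact w.2.2.1
  have wval : ∀ (t : Fin 3) (h : Dedge k (prevv v t) v) (w : Walk k n u (prevv v t))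
      (e : (extendW t h w).1 (Fin.castSucc (Fin.last n)) = prevv v t),
      retarget e (restrictW (extendW t h w)) = w := by
    intro t h w e
    apply Subtype.ext
    show Fin.init (Fin.snoc w.1 v : Fin (n + 2) → ℕ × ℕ) = w.1
    exact Fin.init_snoc _ _
  obtain (⟨⟨h⟩, w⟩ | ⟨⟨h⟩, w⟩ | ⟨⟨h⟩, w⟩) := x
  · show decompFun (extendW 0 h w) = _
    have hst : stepType ((extendW 0 h w).1 (Fin.castSucc (Fin.last n))) v = 0 := by
      rw [pen 0 h w]; exact stepType_prevv 0 h
    erw [decompFun, dif_pos hst]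
    congr 1
    refine Prod.ext rfl ?_
    exact Subtype.ext (congrArg Subtype.val (wval 0 h w (pen 0 h w)))
  · show decompFun (extendW 1 h w) = _
    have hst : stepType ((extendW 1 h w).1 (Fin.castSucc (Fin.last n))) v = 1 := by
      rw [pen 1 h w]; exact stepType_prevv 1 h
    erw [decompFun, dif_neg (show ¬stepType ((extendW 1 h w).1 (Fin.castSucc (Fin.last n))) v = 0
      by rw [hst]; decide), dif_pos hst]
    congr 1
    refine congrArg Sum.inl (Prod.ext rfl ?_)
    exact Subtype.ext (congrArg Subtype.val (wval 1 h w (pen 1 h w)))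
  · show decompFun (extendW 2 h w) = _
    have hst : stepType ((extendW 2 h w).1 (Fin.castSucc (Fin.last n))) v = 2 := by
      rw [pen 2 h w]; exact stepType_prevv 2 h
    erw [decompFun, dif_neg (show ¬stepType ((extendW 2 h w).1 (Fin.castSucc (Fin.last n))) v = 0
      by rw [hst]; decide), dif_neg (show ¬stepType ((extendW 2 h w).1
        (Fin.castSucc (Fin.last n))) v = 1 by rw [hst]; decide)]
    congr 1
    refine congrArg Sum.inr (Prod.ext rfl ?_)
    exact Subtype.ext (congrArg Subtype.val (wval 2 h w (pen 2 h w)))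

noncomputable def decomp : Walk k (n + 1) u v ≃ Tgt k n u v :=
  ⟨decompFun, decompInv, decomp_left_inv, decomp_right_inv⟩

end

attribute [local instance] Classical.propDecidable

lemma dedge_iff (k a b c d : ℕ) :
    Dedge k (a, b) (c, d) ↔ (a + b ≤ k ∧ c + d ≤ k ∧
      ((c = a ∧ d = b + 1) ∨ (c + 1 = a ∧ d = b) ∨ (c = a + 1 ∧ d + 1 = b))) := by
  simp [Dedge, Prod.ext_iff]

lemma card_plift_prod (p : Prop) (α : Type) [Finite α] :
    Nat.card (PLift p × α) = if p then Nat.card α else 0 := by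
  classical
  rw [Nat.card_prod]
  split_ifs with hp
  · haveI : Unique (PLift p) := ⟨⟨⟨hp⟩⟩, fun x => by cases x; rfl⟩
    rw [Nat.card_unique, one_mul]
  · haveI : IsEmpty (PLift p) := ⟨fun x => hp x.down⟩
    rw [Nat.card_of_isEmpty, zero_mul]

lemma walkCount_succ (k n : ℕ) (u v : ℕ × ℕ) :
    walkCount k (n + 1) u v =
      (if Dedge k (prevv v 0) v then walkCount k n u (prevv v 0) else 0) +
      ((if Dedge k (prevv v 1) v then walkCount k n u (prevv v 1) else 0) +
       (if Dedge k (prevv v 2) v then walkCount k n u (prevv v 2) else 0)) := by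
  rw [walkCount, Nat.card_congr (decomp (k := k) (n := n) (u := u) (v := v))]
  show Nat.card (_ ⊕ _ ⊕ _) = _
  rw [Nat.card_sum, Nat.card_sum, card_plift_prod, card_plift_prod, card_plift_prod]
  rfl

lemma walkCount_zero (k : ℕ) (u v : ℕ × ℕ) :
    walkCount k 0 u v = if u = v then 1 else 0 := by
  rcases eq_or_ne u v with h | h
  · subst h
    rw [if_pos rfl, walkCount]
    haveI : Unique (Walk k 0 u u) :=
      { default := ⟨fun _ => u, rfl, rfl, fun i => i.elim0⟩,
        uniq := fun w => Subtype.ext (funext fun i => by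
          have h0 : i = 0 := Fin.ext (by have := i.isLt; omega)
          rw [h0, w.2.1]) }
    exact Nat.card_unique
  · rw [if_neg h, walkCount]
    haveI : IsEmpty (Walk k 0 u v) := ⟨fun w => h (w.2.1.symm.trans w.2.2.1)⟩
    exact Nat.card_of_isEmpty

/-- Unconstrained quarter-plane walk counts. -/
def W : ℕ → ℕ × ℕ → ℕ
  | 0, p => if p = (0, 0) then 1 else 0
  | n + 1, p =>
      (if 1 ≤ p.2 then W n (p.1, p.2 - 1) else 0) +
      (W n (p.1 + 1, p.2) + (if 1 ≤ p.1 then W n (p.1 - 1, p.2 + 1) else 0))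

lemma W_eq_zero : ∀ (n : ℕ) (i j : ℕ), n < i + j → W n (i, j) = 0 := by
  intro n
  induction n with
  | zero =>
    intro i j h
    rw [W, if_neg (by simp [Prod.ext_iff]; omega)]
  | succ n ih =>
    intro i j h
    rw [W]
    have t1 : (if 1 ≤ j then W n (i, j - 1) else 0) = 0 := by
      split_ifs with hj
      · exact ih i (j - 1) (by omega)
      · rfl
    have t2 : W n (i + 1, j) = 0 := ih (i + 1) j (by omega)
    have t3 : (if 1 ≤ i then W n (i - 1, j + 1) else 0) = 0 := by
      split_ifs with hi
      · exact ih (i - 1) (j + 1) (by omega)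
      · rfl
    dsimp only at t1 t2 t3 ⊢
    omega

lemma walkCount_eq_W {k : ℕ} : ∀ n, n ≤ k → ∀ i j : ℕ,
    walkCount k n (0, 0) (i, j) = W n (i, j) := by
  intro n
  induction n with
  | zero =>
    intro _ i j
    rw [walkCount_zero, W]
    by_cases h : (i, j) = ((0, 0) : ℕ × ℕ)
    · rw [if_pos h, if_pos h.symm]
    · rw [if_neg h, if_neg (fun hh => h hh.symm)]
  | succ n ih =>
    intro hk i j
    have hk' : n ≤ k := by omega
    have p0 : prevv (i, j) 0 = (i, j - 1) := by simp [prevv]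
    have p1 : prevv (i, j) 1 = (i + 1, j) := by simp [prevv]
    have p2 : prevv (i, j) 2 = (i - 1, j + 1) := by simp [prevv]
    rw [walkCount_succ, W, p0, p1, p2]
    dsimp only
    congr 1
    · by_cases hj : 1 ≤ j
      · by_cases hs : i + j ≤ k
        · rw [if_pos ((dedge_iff k i (j - 1) i j).mpr (by omega)), if_pos hj]
          exact ih hk' i (j - 1)
        · rw [if_neg (fun hd => by rw [dedge_iff] at hd; omega), if_pos hj,
            W_eq_zero n i (j - 1) (by omega)]
      · rw [if_neg (fun hd => by rw [dedge_iff] at hd; omega), if_neg hj]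
    congr 1
    · by_cases hs : i + 1 + j ≤ k
      · rw [if_pos ((dedge_iff k (i + 1) j i j).mpr (by omega))]
        exact ih hk' (i + 1) j
      · rw [if_neg (fun hd => by rw [dedge_iff] at hd; omega),
          W_eq_zero n (i + 1) j (by omega)]
    · by_cases hi : 1 ≤ i
      · by_cases hs : i + j ≤ k
        · rw [if_pos ((dedge_iff k (i - 1) (j + 1) i j).mpr (by omega)), if_pos hi]
          exact ih hk' (i - 1) (j + 1)
        · rw [if_neg (fun hd => by rw [dedge_iff] at hd; omega), if_pos hi,
            W_eq_zero n (i - 1) (j + 1) (by omega)]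
      · rw [if_neg (fun hd => by rw [dedge_iff] at hd; omega), if_neg hi]


open Nat

/-- Closed form: number of SYT with 3 rows. -/
noncomputable def F (n i j : ℕ) : ℚ :=
  if 2 * i + j ≤ n ∧ 3 ∣ n - (2 * i + j) then
    (n ! : ℚ) * ((i : ℚ) + 1) * ((j : ℚ) + 1) * ((i : ℚ) + (j : ℚ) + 2) /
      ((((n - (2 * i + j)) / 3 + i + j + 2)! : ℚ) * (((n - (2 * i + j)) / 3 + i + 1)! : ℚ) *
        (((n - (2 * i + j)) / 3)! : ℚ))
  else 0

lemma F_val (n i j c : ℕ) (h : n = 2 * i + j + 3 * c) :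
    F n i j = (n ! : ℚ) * ((i : ℚ) + 1) * ((j : ℚ) + 1) * ((i : ℚ) + (j : ℚ) + 2) /
      (((c + i + j + 2)! : ℚ) * ((c + i + 1)! : ℚ) * ((c)! : ℚ)) := by
  have hc : (n - (2 * i + j)) / 3 = c := by omega
  rw [F, if_pos (by omega), hc]

lemma F_val0 {n i j : ℕ} (h : ¬(2 * i + j ≤ n ∧ 3 ∣ n - (2 * i + j))) : F n i j = 0 := by
  rw [F, if_neg h]

lemma fact_ne (m : ℕ) : ((m ! : ℚ)) ≠ 0 :=
  Nat.cast_ne_zero.2 (Nat.factorial_ne_zero m)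

lemma F_rec (n i j : ℕ) :
    F (n + 1) i j = (if 1 ≤ j then F n i (j - 1) else 0) +
      (F n (i + 1) j + (if 1 ≤ i then F n (i - 1) (j + 1) else 0)) := by
  by_cases hC : 2 * i + j ≤ n + 1 ∧ 3 ∣ n + 1 - (2 * i + j)
  · obtain ⟨c, hc⟩ : ∃ c, n + 1 = 2 * i + j + 3 * c := by
      obtain ⟨hs, d, hd⟩ := hC; exact ⟨d, by omega⟩
    have e0 : (if 1 ≤ j then F n i (j - 1) else 0) =
        (n ! : ℚ) * (((i : ℚ) + 1) * (j : ℚ) * ((i : ℚ) + (j : ℚ) + 1) * ((c : ℚ) + i + j + 2)) /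
          (((c + i + j + 2)! : ℚ) * ((c + i + 1)! : ℚ) * ((c)! : ℚ)) := by
      by_cases hj : 1 ≤ j
      · rw [if_pos hj, F_val n i (j - 1) c (by omega),
          show c + i + (j - 1) + 2 = c + i + j + 1 by omega,
          show ((c + i + j + 2)! : ℚ) = ((c : ℚ) + i + j + 2) * ((c + i + j + 1)! : ℚ) by
            rw [show c + i + j + 2 = (c + i + j + 1) + 1 from rfl, Nat.factorial_succ]
            push_cast; ring]
        rw [div_eq_div_iff (by positivity) (by
          have := fact_ne (c + i + j + 1); have := fact_ne (c + i + 1); have := fact_ne c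
          positivity)]
        have hj' : ((j - 1 : ℕ) : ℚ) = (j : ℚ) - 1 := by
          rw [Nat.cast_sub hj]; norm_num
        rw [hj']; ring
      · rw [if_neg hj]
        have hj0 : j = 0 := by omega
        subst hj0; push_cast; ring
    have e1 : F n (i + 1) j =
        (n ! : ℚ) * (((i : ℚ) + 2) * ((j : ℚ) + 1) * ((i : ℚ) + (j : ℚ) + 3) * (c : ℚ)) /
          (((c + i + j + 2)! : ℚ) * ((c + i + 1)! : ℚ) * ((c)! : ℚ)) := by
      by_cases hc1 : 1 ≤ c
      · obtain ⟨c', rfl⟩ : ∃ c', c = c' + 1 := ⟨c - 1, by omega⟩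
        rw [F_val n (i + 1) j c' (by omega),
          show c' + (i + 1) + j + 2 = (c' + 1) + i + j + 2 by omega,
          show c' + (i + 1) + 1 = (c' + 1) + i + 1 by omega,
          show (((c' + 1))! : ℚ) = ((c' : ℚ) + 1) * ((c')! : ℚ) by
            rw [Nat.factorial_succ]; push_cast; ring]
        rw [div_eq_div_iff (by
            have := fact_ne ((c' + 1) + i + j + 2); have := fact_ne ((c' + 1) + i + 1)
            have := fact_ne c'
            positivity) (by
            have := fact_ne ((c' + 1) + i + j + 2); have := fact_ne ((c' + 1) + i + 1)
            have := fact_ne c'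
            positivity)]
        push_cast; ring
      · have hc0 : c = 0 := by omega
        subst hc0
        rw [F_val0 (by omega)]
        push_cast; ring
    have e2 : (if 1 ≤ i then F n (i - 1) (j + 1) else 0) =
        (n ! : ℚ) * ((i : ℚ) * ((j : ℚ) + 2) * ((i : ℚ) + (j : ℚ) + 2) * ((c : ℚ) + i + 1)) /
          (((c + i + j + 2)! : ℚ) * ((c + i + 1)! : ℚ) * ((c)! : ℚ)) := by
      by_cases hi : 1 ≤ i
      · rw [if_pos hi, F_val n (i - 1) (j + 1) c (by omega),
          show c + (i - 1) + (j + 1) + 2 = c + i + j + 2 by omega,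
          show ((c + i + 1)! : ℚ) = ((c : ℚ) + i + 1) * ((c + i)! : ℚ) by
            rw [show c + i + 1 = (c + i) + 1 from rfl, Nat.factorial_succ]
            push_cast; ring,
          show c + (i - 1) + 1 = c + i by omega]
        rw [div_eq_div_iff (by
            have := fact_ne (c + i + j + 2); have := fact_ne (c + i); have := fact_ne c
            positivity) (by
            have := fact_ne (c + i + j + 2); have := fact_ne (c + i); have := fact_ne c
            positivity)]
        have hi' : ((i - 1 : ℕ) : ℚ) = (i : ℚ) - 1 := by
          rw [Nat.cast_sub hi]; norm_num
        rw [hi']; push_cast; ring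
      · rw [if_neg hi]
        have hi0 : i = 0 := by omega
        subst hi0; push_cast; ring
    rw [e0, e1, e2, F_val (n + 1) i j c hc, ← add_div, ← add_div]
    congr 1
    have hn : ((n + 1)! : ℚ) = ((n : ℚ) + 1) * (n ! : ℚ) := by
      rw [Nat.factorial_succ]; push_cast; ring
    have hnc : (n : ℚ) + 1 = 3 * (c : ℚ) + 2 * (i : ℚ) + (j : ℚ) := by
      have : (n : ℚ) + 1 = ((n + 1 : ℕ) : ℚ) := by push_cast; ring
      rw [this, hc]; push_cast; ring
    rw [hn, hnc]; ring
  · rw [F_val0 hC]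
    have e0 : (if 1 ≤ j then F n i (j - 1) else 0) = 0 := by
      split_ifs with hj
      · exact F_val0 (by omega)
      · rfl
    have e1 : F n (i + 1) j = 0 := F_val0 (by omega)
    have e2 : (if 1 ≤ i then F n (i - 1) (j + 1) else 0) = 0 := by
      split_ifs with hi
      · exact F_val0 (by omega)
      · rfl
    rw [e0, e1, e2]; ring

lemma W_cast : ∀ (n : ℕ) (i j : ℕ), ((W n (i, j) : ℕ) : ℚ) = F n i j := by
  intro n
  induction n with
  | zero =>
    intro i j
    rw [W]
    by_cases h : ((i, j) : ℕ × ℕ) = (0, 0)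
    · rw [if_pos h]
      obtain ⟨h1, h2⟩ := Prod.mk.injEq .. ▸ h
      subst h1; subst h2
      rw [F_val 0 0 0 0 (by omega)]
      norm_num [Nat.factorial]
    · rw [if_neg h]
      have : ¬(2 * i + j ≤ 0 ∧ 3 ∣ 0 - (2 * i + j)) := by
        simp [Prod.ext_iff] at h
        omega
      rw [F_val0 this]
      norm_num
  | succ n ih =>
    intro i j
    rw [W, F_rec]
    push_cast
    rw [ih i (j - 1), ih (i + 1) j, ih (i - 1) (j + 1)]
end Stmt18Aux

/-- For `3 ∣ n` and `k ≥ n`, the number of closed walks of length `n` at `(0,0)`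
in `D_k` is the 3-dimensional Catalan number `2·n!/((n/3)!·(n/3+1)!·(n/3+2)!)`. -/
theorem stmt18 (n k : ℕ) (h3 : 3 ∣ n) (hk : n ≤ k) :
    walkCount k n (0, 0) (0, 0) =
      2 * Nat.factorial n /
        (Nat.factorial (n / 3) * Nat.factorial (n / 3 + 1) * Nat.factorial (n / 3 + 2)) := by
  obtain ⟨m, hm⟩ := h3
  have hm3 : n / 3 = m := by omega
  rw [hm3]
  have h1 : walkCount k n (0, 0) (0, 0) = Stmt18Aux.W n (0, 0) :=
    Stmt18Aux.walkCount_eq_W n hk 0 0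
  have h2 : ((Stmt18Aux.W n (0, 0) : ℕ) : ℚ) = Stmt18Aux.F n 0 0 := Stmt18Aux.W_cast n 0 0
  rw [Stmt18Aux.F_val n 0 0 m (by omega),
    show m + 0 + 0 + 2 = m + 2 by omega, show m + 0 + 1 = m + 1 by omega] at h2
  have key : ((Stmt18Aux.W n (0, 0) : ℕ) : ℚ) *
      ((Nat.factorial m : ℚ) * (Nat.factorial (m + 1) : ℚ) * (Nat.factorial (m + 2) : ℚ)) =
      2 * (Nat.factorial n : ℚ) := by
    rw [h2]
    field_simp [Stmt18Aux.fact_ne m, Stmt18Aux.fact_ne (m + 1), Stmt18Aux.fact_ne (m + 2)]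
    ring
  have keyN : Stmt18Aux.W n (0, 0) *
      (Nat.factorial m * Nat.factorial (m + 1) * Nat.factorial (m + 2)) =
      2 * Nat.factorial n := by exact_mod_cast key
  have hD : 0 < Nat.factorial m * Nat.factorial (m + 1) * Nat.factorial (m + 2) :=
    Nat.mul_pos (Nat.mul_pos (Nat.factorial_pos m) (Nat.factorial_pos (m + 1)))
      (Nat.factorial_pos (m + 2))
  rw [h1]
  exact (Nat.div_eq_of_eq_mul_left hD keyN.symm).symm
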